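/- Let P and N be smooth matrix-valued maps on ℝⁿ such that P(x) is skew-symmetric and N(x)P(x) is skew-symmetric for every x, and suppose the Nijenhuis torsion of N vanishes identically. Then for all m, k ≥ 1 and every point: Σ_{i,j} (∂_i Tr(N^m)) P^{ij} (∂_j Tr(N^k)) = 0. That is, the fundamental functions I_k = Tr(N^k)/k are pairwise in involution with respect to the Poisson bracket {f, g}_P = Σ_{i,j} (∂_i f) P^{ij} (∂_j g). -/

import Mathlib

open Matrix BigOperators

/-- Partial derivative in the `l`-th coordinate direction. -/
noncomputable def pd {n : ℕ} (l : Fin n) (f : (Fin n → ℝ) → ℝ) (x : Fin n → ℝ) : ℝ :=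
  fderiv ℝ f x (Pi.single l 1)

/-- The Nijenhuis torsion of a (1,1)-tensor field `N`, in coordinates. -/
noncomputable def nijenhuisTorsion {n : ℕ}
    (N : (Fin n → ℝ) → Matrix (Fin n) (Fin n) ℝ)
    (k i j : Fin n) (x : Fin n → ℝ) : ℝ :=
  ∑ l, (N x l i * pd l (fun y => N y k j) x
      - N x l j * pd l (fun y => N y k i) x
      - N x k l * (pd i (fun y => N y l j) x - pd j (fun y => N y l i) x))

section Aux

variable {n : ℕ} {N P : (Fin n → ℝ) → Matrix (Fin n) (Fin n) ℝ}

lemma pd_sum {ι : Type*} (s : Finset ι) (f : ι → (Fin n → ℝ) → ℝ) (l : Fin n)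
    (x : Fin n → ℝ) (hf : ∀ a ∈ s, DifferentiableAt ℝ (f a) x) :
    pd l (fun y => ∑ a ∈ s, f a y) x = ∑ a ∈ s, pd l (f a) x := by
  unfold pd
  rw [fderiv_fun_sum hf, ContinuousLinearMap.sum_apply]

lemma pd_mul (f g : (Fin n → ℝ) → ℝ) (l : Fin n) (x : Fin n → ℝ)
    (hf : DifferentiableAt ℝ f x) (hg : DifferentiableAt ℝ g x) :
    pd l (fun y => f y * g y) x = pd l f x * g x + f x * pd l g x := by
  unfold pd
  rw [fderiv_fun_mul hf hg]
  simp [ContinuousLinearMap.add_apply, ContinuousLinearMap.smul_apply, smul_eq_mul]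
  ring

lemma sum3_rot (f : Fin n → Fin n → Fin n → ℝ) :
    (∑ a, ∑ j, ∑ l, f a j l) = ∑ l, ∑ a, ∑ j, f a j l := by
  calc (∑ a, ∑ j, ∑ l, f a j l)
      = ∑ a, ∑ l, ∑ j, f a j l := Finset.sum_congr rfl (fun a _ => Finset.sum_comm)
    _ = ∑ l, ∑ a, ∑ j, f a j l := Finset.sum_comm

lemma sum3_rot' (f : Fin n → Fin n → Fin n → ℝ) :
    (∑ i, ∑ l, ∑ j, f i l j) = ∑ j, ∑ l, ∑ i, f i l j := by
  calc (∑ i, ∑ l, ∑ j, f i l j)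
      = ∑ i, ∑ j, ∑ l, f i l j := Finset.sum_congr rfl (fun _ _ => Finset.sum_comm)
    _ = ∑ j, ∑ i, ∑ l, f i l j := Finset.sum_comm
    _ = ∑ j, ∑ l, ∑ i, f i l j := Finset.sum_congr rfl (fun _ _ => Finset.sum_comm)

lemma contDiff_pow_entry (hN : ∀ i j, ContDiff ℝ (⊤ : ℕ∞) (fun x => N x i j)) :
    ∀ (q : ℕ) (a b : Fin n), ContDiff ℝ (⊤ : ℕ∞) (fun y => (N y ^ q) a b) := by
  intro q
  induction q with
  | zero =>
      intro a b
      simp only [pow_zero]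
      exact contDiff_const
  | succ q ih =>
      intro a b
      have h : (fun y => (N y ^ (q + 1)) a b)
          = fun y => ∑ c, N y a c * (N y ^ q) c b := by
        funext y; rw [pow_succ']; rfl
      rw [h]
      exact ContDiff.sum fun c _ => (hN a c).mul (ih c b)

lemma diff_pow_entry (hN : ∀ i j, ContDiff ℝ (⊤ : ℕ∞) (fun x => N x i j))
    (q : ℕ) (a b : Fin n) (x : Fin n → ℝ) :
    DifferentiableAt ℝ (fun y => (N y ^ q) a b) x :=
  ((contDiff_pow_entry hN q a b).differentiable (by simp)).differentiableAt

lemma pd_pow_succ (hN : ∀ i j, ContDiff ℝ (⊤ : ℕ∞) (fun x => N x i j))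
    (q : ℕ) (a b l : Fin n) (x : Fin n → ℝ) :
    pd l (fun y => (N y ^ (q + 1)) a b) x
      = ∑ c, (pd l (fun y => N y a c) x * (N x ^ q) c b
            + N x a c * pd l (fun y => (N y ^ q) c b) x) := by
  have h : (fun y => (N y ^ (q + 1)) a b)
      = fun y => ∑ c, N y a c * (N y ^ q) c b := by
    funext y; rw [pow_succ']; rfl
  have hd : ∀ c : Fin n, c ∈ (Finset.univ : Finset (Fin n)) →
      DifferentiableAt ℝ (fun y => N y a c * (N y ^ q) c b) x := fun c _ =>
    (((hN a c).differentiable (by simp)).differentiableAt).mul (diff_pow_entry hN q c b x)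
  rw [h, pd_sum _ _ _ _ hd]
  exact Finset.sum_congr rfl fun c _ => pd_mul _ _ _ _
    (((hN a c).differentiable (by simp)).differentiableAt) (diff_pow_entry hN q c b x)

/-- `Fk k i x = Tr (N^k ⬝ ∂ᵢN)`. -/
noncomputable def Fk (N : (Fin n → ℝ) → Matrix (Fin n) (Fin n) ℝ)
    (k : ℕ) (i : Fin n) (x : Fin n → ℝ) : ℝ :=
  ∑ a, ∑ b, (N x ^ k) a b * pd i (fun y => N y b a) x

/-- `Rk p q i x = Tr (N^p ⬝ ∂ᵢ(N^q))`. -/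
noncomputable def Rk (N : (Fin n → ℝ) → Matrix (Fin n) (Fin n) ℝ)
    (p q : ℕ) (i : Fin n) (x : Fin n → ℝ) : ℝ :=
  ∑ a, ∑ b, (N x ^ p) a b * pd i (fun y => (N y ^ q) b a) x

lemma pd_const (c : ℝ) (l : Fin n) (x : Fin n → ℝ) :
    pd l (fun _ => c) x = 0 := by
  unfold pd
  rw [fderiv_fun_const]
  simp

lemma Rk_zero (p : ℕ) (i : Fin n) (x : Fin n → ℝ) : Rk N p 0 i x = 0 := by
  unfold Rk
  simp only [pow_zero]
  have h : ∀ b a : Fin n, pd i (fun _ => (1 : Matrix (Fin n) (Fin n) ℝ) b a) x = 0 :=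
    fun b a => pd_const _ _ _
  simp [h]

lemma Rk_succ (hN : ∀ i j, ContDiff ℝ (⊤ : ℕ∞) (fun x => N x i j))
    (p q : ℕ) (i : Fin n) (x : Fin n → ℝ) :
    Rk N p (q + 1) i x = Fk N (p + q) i x + Rk N (p + 1) q i x := by
  unfold Rk
  have expand : ∀ a b : Fin n,
      (N x ^ p) a b * pd i (fun y => (N y ^ (q + 1)) b a) x
        = ∑ c, ((N x ^ p) a b * (pd i (fun y => N y b c) x * (N x ^ q) c a)
              + (N x ^ p) a b * (N x b c * pd i (fun y => (N y ^ q) c a) x)) := by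
    intro a b
    rw [pd_pow_succ hN q b a i x, Finset.mul_sum]
    exact Finset.sum_congr rfl fun c _ => by ring
  calc (∑ a, ∑ b, (N x ^ p) a b * pd i (fun y => (N y ^ (q + 1)) b a) x)
      = ∑ a, ∑ b, ∑ c, ((N x ^ p) a b * (pd i (fun y => N y b c) x * (N x ^ q) c a)
              + (N x ^ p) a b * (N x b c * pd i (fun y => (N y ^ q) c a) x)) := by
        exact Finset.sum_congr rfl fun a _ => Finset.sum_congr rfl fun b _ => expand a b
    _ = (∑ a, ∑ b, ∑ c, (N x ^ p) a b * (pd i (fun y => N y b c) x * (N x ^ q) c a))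
        + ∑ a, ∑ b, ∑ c, (N x ^ p) a b * (N x b c * pd i (fun y => (N y ^ q) c a) x) := by
        simp [Finset.sum_add_distrib]
    _ = Fk N (p + q) i x + Rk N (p + 1) q i x := by
        congr 1
        · -- first piece: ∑_c ∑_b (∑_a (N^q)_{ca} (N^p)_{ab}) * pd N_{bc}
          rw [sum3_rot]
          unfold Fk
          refine Finset.sum_congr rfl fun c _ => ?_
          rw [Finset.sum_comm]
          refine Finset.sum_congr rfl fun b _ => ?_
          have : ∀ a : Fin n, (N x ^ p) a b * (pd i (fun y => N y b c) x * (N x ^ q) c a)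
              = ((N x ^ q) c a * (N x ^ p) a b) * pd i (fun y => N y b c) x := fun a => by ring
          rw [Finset.sum_congr rfl fun a _ => this a, ← Finset.sum_mul,
            ← Matrix.mul_apply, ← pow_add]
          rw [add_comm q p]
        · unfold Rk
          refine Finset.sum_congr rfl fun a _ => ?_
          rw [Finset.sum_comm]
          refine Finset.sum_congr rfl fun c _ => ?_
          have : ∀ b : Fin n, (N x ^ p) a b * (N x b c * pd i (fun y => (N y ^ q) c a) x)
              = ((N x ^ p) a b * N x b c) * pd i (fun y => (N y ^ q) c a) x := fun b => by ring
          rw [Finset.sum_congr rfl fun b _ => this b, ← Finset.sum_mul,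
            ← Matrix.mul_apply, ← pow_succ]

lemma Rk_formula (hN : ∀ i j, ContDiff ℝ (⊤ : ℕ∞) (fun x => N x i j)) (i : Fin n) (x : Fin n → ℝ) :
    ∀ (q p : ℕ), Rk N p (q + 1) i x = (q + 1 : ℝ) * Fk N (p + q) i x := by
  intro q
  induction q with
  | zero =>
      intro p
      rw [Rk_succ hN, Rk_zero]
      simp
  | succ q ih =>
      intro p
      rw [Rk_succ hN]
      have h2 := ih (p + 1)
      rw [h2]
      have : p + 1 + q = p + (q + 1) := by omega
      rw [this]
      push_cast
      ring

lemma pd_trace (hN : ∀ i j, ContDiff ℝ (⊤ : ℕ∞) (fun x => N x i j))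
    (q : ℕ) (i : Fin n) (x : Fin n → ℝ) :
    pd i (fun y => ∑ a, (N y ^ (q + 1)) a a) x = (q + 1 : ℝ) * Fk N q i x := by
  have h1 : pd i (fun y => ∑ a, (N y ^ (q + 1)) a a) x
      = ∑ a, pd i (fun y => (N y ^ (q + 1)) a a) x :=
    pd_sum _ _ _ _ fun a _ => diff_pow_entry hN (q + 1) a a x
  have h2 : Rk N 0 (q + 1) i x = ∑ a, pd i (fun y => (N y ^ (q + 1)) a a) x := by
    unfold Rk
    refine Finset.sum_congr rfl fun a _ => ?_
    rw [Finset.sum_eq_single a]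
    · simp
    · intro b _ hb
      simp [Matrix.one_apply, (Ne.symm hb)]
    · simp
  rw [h1, ← h2, Rk_formula hN i x q 0]
  norm_num

/-- Torsion-free recursion: `F_{k+1}(i) = ∑_l N_{l i} F_k(l)`. -/
lemma Fk_succ (hN : ∀ i j, ContDiff ℝ (⊤ : ℕ∞) (fun x => N x i j))
    (hT : ∀ (a i j : Fin n) (x : Fin n → ℝ), nijenhuisTorsion N a i j x = 0)
    (k : ℕ) (i : Fin n) (x : Fin n → ℝ) :
    Fk N (k + 1) i x = ∑ l, N x l i * Fk N k l x := by
  have h0 : (∑ a, ∑ j, (N x ^ k) j a * nijenhuisTorsion N a i j x) = 0 := by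
    simp [hT]
  set A : Fin n → Fin n → ℝ := fun j a => (N x ^ k) j a with hA
  have expand : ∀ a j : Fin n, A j a * nijenhuisTorsion N a i j x
      = ∑ l, (A j a * (N x l i * pd l (fun y => N y a j) x)
            - A j a * (N x l j * pd l (fun y => N y a i) x)
            - A j a * (N x a l * pd i (fun y => N y l j) x)
            + A j a * (N x a l * pd j (fun y => N y l i) x)) := by
    intro a j
    unfold nijenhuisTorsion
    rw [Finset.mul_sum]
    exact Finset.sum_congr rfl fun l _ => by ring
  have h1 : (∑ a, ∑ j, ∑ l, (A j a * (N x l i * pd l (fun y => N y a j) x)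
            - A j a * (N x l j * pd l (fun y => N y a i) x)
            - A j a * (N x a l * pd i (fun y => N y l j) x)
            + A j a * (N x a l * pd j (fun y => N y l i) x))) = 0 := by
    rw [← h0]
    exact (Finset.sum_congr rfl fun a _ => Finset.sum_congr rfl fun j _ =>
      (expand a j).symm)
  have hsplit : (∑ a, ∑ j, ∑ l, A j a * (N x l i * pd l (fun y => N y a j) x))
      - (∑ a, ∑ j, ∑ l, A j a * (N x l j * pd l (fun y => N y a i) x))
      - (∑ a, ∑ j, ∑ l, A j a * (N x a l * pd i (fun y => N y l j) x))
      + (∑ a, ∑ j, ∑ l, A j a * (N x a l * pd j (fun y => N y l i) x)) = 0 := by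
    rw [← h1]
    simp [Finset.sum_add_distrib, Finset.sum_sub_distrib]
  -- S1
  have hS1 : (∑ a, ∑ j, ∑ l, A j a * (N x l i * pd l (fun y => N y a j) x))
      = ∑ l, N x l i * Fk N k l x := by
    rw [sum3_rot]
    refine Finset.sum_congr rfl fun l _ => ?_
    unfold Fk
    rw [Finset.mul_sum]
    rw [Finset.sum_comm]
    refine Finset.sum_congr rfl fun a _ => ?_
    rw [Finset.mul_sum]
    refine Finset.sum_congr rfl fun j _ => ?_
    rw [hA]; ring
  -- S3
  have hS3 : (∑ a, ∑ j, ∑ l, A j a * (N x a l * pd i (fun y => N y l j) x))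
      = Fk N (k + 1) i x := by
    calc (∑ a, ∑ j, ∑ l, A j a * (N x a l * pd i (fun y => N y l j) x))
        = ∑ j, ∑ l, ∑ a, A j a * (N x a l * pd i (fun y => N y l j) x) := by
          rw [Finset.sum_comm]
          exact Finset.sum_congr rfl fun j _ => Finset.sum_comm
      _ = ∑ j, ∑ l, (N x ^ (k + 1)) j l * pd i (fun y => N y l j) x := by
          refine Finset.sum_congr rfl fun j _ => Finset.sum_congr rfl fun l _ => ?_
          have : ∀ a : Fin n, A j a * (N x a l * pd i (fun y => N y l j) x)
              = ((N x ^ k) j a * N x a l) * pd i (fun y => N y l j) x := fun a => by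
            rw [hA]; ring
          rw [Finset.sum_congr rfl fun a _ => this a, ← Finset.sum_mul,
            ← Matrix.mul_apply, ← pow_succ]
      _ = Fk N (k + 1) i x := rfl
  -- S2 = S4
  have hS2 : (∑ a, ∑ j, ∑ l, A j a * (N x l j * pd l (fun y => N y a i) x))
      = ∑ l, ∑ a, (N x ^ (k + 1)) l a * pd l (fun y => N y a i) x := by
    rw [sum3_rot]
    refine Finset.sum_congr rfl fun l _ => Finset.sum_congr rfl fun a _ => ?_
    have : ∀ j : Fin n, A j a * (N x l j * pd l (fun y => N y a i) x)
        = (N x l j * (N x ^ k) j a) * pd l (fun y => N y a i) x := fun j => by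
      rw [hA]; ring
    rw [Finset.sum_congr rfl fun j _ => this j, ← Finset.sum_mul,
      ← Matrix.mul_apply, ← pow_succ']
  have hS4 : (∑ a, ∑ j, ∑ l, A j a * (N x a l * pd j (fun y => N y l i) x))
      = ∑ l, ∑ a, (N x ^ (k + 1)) l a * pd l (fun y => N y a i) x := by
    calc (∑ a, ∑ j, ∑ l, A j a * (N x a l * pd j (fun y => N y l i) x))
        = ∑ j, ∑ l, ∑ a, A j a * (N x a l * pd j (fun y => N y l i) x) := by
          rw [Finset.sum_comm]
          exact Finset.sum_congr rfl fun j _ => Finset.sum_comm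
      _ = ∑ j, ∑ l, (N x ^ (k + 1)) j l * pd j (fun y => N y l i) x := by
          refine Finset.sum_congr rfl fun j _ => Finset.sum_congr rfl fun l _ => ?_
          have : ∀ a : Fin n, A j a * (N x a l * pd j (fun y => N y l i) x)
              = ((N x ^ k) j a * N x a l) * pd j (fun y => N y l i) x := fun a => by
            rw [hA]; ring
          rw [Finset.sum_congr rfl fun a _ => this a, ← Finset.sum_mul,
            ← Matrix.mul_apply, ← pow_succ]
  rw [hS1, hS2, hS3, hS4] at hsplit
  linarith

end Aux

section Bracket

variable {n : ℕ} {N P : (Fin n → ℝ) → Matrix (Fin n) (Fin n) ℝ}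

/-- `B m k x = ∑ᵢⱼ Fₘ(i) Pᵢⱼ F_k(j)`. -/
noncomputable def Bk (N P : (Fin n → ℝ) → Matrix (Fin n) (Fin n) ℝ)
    (m k : ℕ) (x : Fin n → ℝ) : ℝ :=
  ∑ i, ∑ j, Fk N m i x * P x i j * Fk N k j x

lemma PNt_eq_NP (hskewP : ∀ x, (P x)ᵀ = -(P x))
    (hskewNP : ∀ x, (N x * P x)ᵀ = -(N x * P x)) (x : Fin n → ℝ) (i l : Fin n) :
    (∑ j, P x i j * N x l j) = ∑ j, N x i j * P x j l := by
  have h1 : P x * (N x)ᵀ = N x * P x := by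
    have h := hskewNP x
    rw [Matrix.transpose_mul, hskewP x, Matrix.neg_mul] at h
    exact neg_injective h
  have h2 := congrFun (congrFun h1 i) l
  rw [Matrix.mul_apply, Matrix.mul_apply] at h2
  simpa [Matrix.transpose_apply] using h2

lemma Bk_shift (hN : ∀ i j, ContDiff ℝ (⊤ : ℕ∞) (fun x => N x i j))
    (hskewP : ∀ x, (P x)ᵀ = -(P x))
    (hskewNP : ∀ x, (N x * P x)ᵀ = -(N x * P x))
    (hT : ∀ (a i j : Fin n) (x : Fin n → ℝ), nijenhuisTorsion N a i j x = 0)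
    (m k : ℕ) (x : Fin n → ℝ) :
    Bk N P m (k + 1) x = Bk N P (m + 1) k x := by
  unfold Bk
  calc (∑ i, ∑ j, Fk N m i x * P x i j * Fk N (k + 1) j x)
      = ∑ i, ∑ j, ∑ l, Fk N m i x * P x i j * (N x l j * Fk N k l x) := by
        refine Finset.sum_congr rfl fun i _ => Finset.sum_congr rfl fun j _ => ?_
        rw [Fk_succ hN hT k j x, Finset.mul_sum]
    _ = ∑ i, ∑ l, ∑ j, Fk N m i x * (P x i j * N x l j) * Fk N k l x := by
        refine Finset.sum_congr rfl fun i _ => ?_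
        rw [Finset.sum_comm]
        exact Finset.sum_congr rfl fun l _ => Finset.sum_congr rfl fun j _ => by ring
    _ = ∑ i, ∑ l, Fk N m i x * (∑ j, P x i j * N x l j) * Fk N k l x := by
        refine Finset.sum_congr rfl fun i _ => Finset.sum_congr rfl fun l _ => ?_
        rw [Finset.mul_sum, Finset.sum_mul]
    _ = ∑ i, ∑ l, Fk N m i x * (∑ j, N x i j * P x j l) * Fk N k l x := by
        refine Finset.sum_congr rfl fun i _ => Finset.sum_congr rfl fun l _ => ?_
        rw [PNt_eq_NP hskewP hskewNP]
    _ = ∑ i, ∑ l, ∑ j, Fk N m i x * (N x i j * P x j l) * Fk N k l x := by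
        refine Finset.sum_congr rfl fun i _ => Finset.sum_congr rfl fun l _ => ?_
        rw [Finset.mul_sum, Finset.sum_mul]
    _ = ∑ j, ∑ l, ∑ i, Fk N m i x * (N x i j * P x j l) * Fk N k l x :=
        sum3_rot' _
    _ = ∑ j, ∑ l, (∑ i, N x i j * Fk N m i x) * P x j l * Fk N k l x := by
        refine Finset.sum_congr rfl fun j _ => Finset.sum_congr rfl fun l _ => ?_
        rw [Finset.sum_mul, Finset.sum_mul]
        exact Finset.sum_congr rfl fun i _ => by ring
    _ = ∑ j, ∑ l, Fk N (m + 1) j x * P x j l * Fk N k l x := by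
        refine Finset.sum_congr rfl fun j _ => Finset.sum_congr rfl fun l _ => ?_
        rw [Fk_succ hN hT m j x]

lemma Bk_antisymm (hskewP : ∀ x, (P x)ᵀ = -(P x)) (m k : ℕ) (x : Fin n → ℝ) :
    Bk N P m k x = - Bk N P k m x := by
  unfold Bk
  have key : ∀ i j : Fin n, Fk N m i x * P x i j * Fk N k j x
      = -(Fk N k j x * P x j i * Fk N m i x) := by
    intro i j
    have h := congrFun (congrFun (hskewP x) j) i
    simp only [Matrix.transpose_apply, Matrix.neg_apply] at h
    rw [h]; ring
  rw [Finset.sum_comm]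
  simp only [key, Finset.sum_neg_distrib]

lemma Bk_zero (hN : ∀ i j, ContDiff ℝ (⊤ : ℕ∞) (fun x => N x i j))
    (hskewP : ∀ x, (P x)ᵀ = -(P x))
    (hskewNP : ∀ x, (N x * P x)ᵀ = -(N x * P x))
    (hT : ∀ (a i j : Fin n) (x : Fin n → ℝ), nijenhuisTorsion N a i j x = 0)
    (m k : ℕ) (x : Fin n → ℝ) : Bk N P m k x = 0 := by
  have key : ∀ (k m : ℕ), Bk N P m k x = Bk N P (m + k) 0 x := by
    intro k
    induction k with
    | zero => intro m; rfl
    | succ k ih =>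
        intro m
        rw [Bk_shift hN hskewP hskewNP hT, ih (m + 1)]
        congr 1
        omega
  have h1 := key k m
  have h2 := key m k
  have h3 := Bk_antisymm (N := N) (P := P) hskewP m k x
  rw [h1] at h3
  rw [h2] at h3
  rw [show k + m = m + k by omega] at h3
  linarith

end Bracket

theorem fundamental_functions_in_involution
    {n : ℕ} (hn : 1 ≤ n)
    (P N : (Fin n → ℝ) → Matrix (Fin n) (Fin n) ℝ)
    (hP : ∀ i j : Fin n, ContDiff ℝ (⊤ : ℕ∞) (fun x => P x i j))
    (hN : ∀ i j : Fin n, ContDiff ℝ (⊤ : ℕ∞) (fun x => N x i j))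
    (hskewP : ∀ x, (P x)ᵀ = -(P x))
    (hskewNP : ∀ x, (N x * P x)ᵀ = -(N x * P x))
    (hT : ∀ (a i j : Fin n) (x : Fin n → ℝ), nijenhuisTorsion N a i j x = 0) :
    ∀ (m k : ℕ), 1 ≤ m → 1 ≤ k → ∀ x : Fin n → ℝ,
      ∑ i, ∑ j, pd i (fun y => ∑ a, ((N y) ^ m) a a) x * P x i j
          * pd j (fun y => ∑ a, ((N y) ^ k) a a) x = 0 := by
  intro m k hm hk x
  obtain ⟨m', rfl⟩ : ∃ m', m = m' + 1 := ⟨m - 1, by omega⟩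
  obtain ⟨k', rfl⟩ : ∃ k', k = k' + 1 := ⟨k - 1, by omega⟩
  have hB := Bk_zero hN hskewP hskewNP hT m' k' x (P := P)
  calc (∑ i, ∑ j, pd i (fun y => ∑ a, ((N y) ^ (m' + 1)) a a) x * P x i j
          * pd j (fun y => ∑ a, ((N y) ^ (k' + 1)) a a) x)
      = ∑ i, ∑ j, ((m' + 1 : ℝ) * Fk N m' i x) * P x i j
          * ((k' + 1 : ℝ) * Fk N k' j x) := by
        refine Finset.sum_congr rfl fun i _ => Finset.sum_congr rfl fun j _ => ?_
        rw [pd_trace hN m' i x, pd_trace hN k' j x]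
    _ = (m' + 1 : ℝ) * (k' + 1 : ℝ) * Bk N P m' k' x := by
        unfold Bk
        rw [Finset.mul_sum]
        refine Finset.sum_congr rfl fun i _ => ?_
        rw [Finset.mul_sum]
        exact Finset.sum_congr rfl fun j _ => by ring
    _ = 0 := by rw [hB, mul_zero]
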